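/- In the 4-3-6-5 sequence starting at k, the first element of the r-th segment is at most ⌈k/2^{r-1}⌉, and the number of segments is at most ⌊log₂ k⌋. -/

import Mathlib

/-! The potential `nextStart465` of a state (element, type) never increases along the sequence and
equals the element at a segment start, so it bounds every later segment start. Across a start `t`
it drops to at most `(t + 1) / 2`. Hence the starts satisfy `t_{r+1} - 1 ≤ (t_r - 1) / 2`, so
`2^(r-1) (t_r - 1) ≤ k - 1`; this gives the ceiling bound and, since every start is at least `4`,
also `2^r ≤ k`. The potential is only monotone on states with the residues and sizes recorded by
`Reachable465`, which is invariant under `step465`. -/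

/-- One transition of Table 1 of the paper, acting on (current element, type). -/
def step465 : ℕ × ℕ × ℕ → ℕ × ℕ × ℕ
  | (t, 4, 3) => (t - 1, 4, 2)
  | (t, 4, 2) => (t - 1, 4, 1)
  | (t, 4, 1) => ((3 * t + 1) / 4, 3, 1)
  | (t, 4, 0) => (3 * t / 4, 3, 0)
  | (t, 3, 1) => if 4 < t then (t, 6, t % 6) else (3, 3, 0)
  | (t, 3, 0) => if 4 < t then (t, 6, t % 6) else (t, 3, 0)
  | (t, 6, 4) => (t - 1, 6, 3)
  | (t, 6, 3) => (t - 1, 6, 2)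
  | (t, 6, 2) => (t - 1, 6, 1)
  | (t, 6, 1) => ((5 * t + 1) / 6, 5, 1)
  | (t, 6, 0) => (5 * t / 6, 5, 0)
  | (t, 5, 1) => ((4 * t + 1) / 5, 4, 1)
  | (t, 5, 0) => (4 * t / 5, 4, 0)
  | p => p

/-- The `i`-th element (0-indexed, paired with its type) of the 4-3-6-5 sequence starting at `k`. -/
def seq465 (k i : ℕ) : ℕ × ℕ × ℕ := step465^[i] (k, 4, k % 4)

/-- An element starts a new segment iff its type is `(4,0)` or `(4,1)`. -/
def isStart465 (p : ℕ × ℕ × ℕ) : Prop := p.2 = (4, 0) ∨ p.2 = (4, 1)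

/-- `NthSegStart k r i` means that position `i` is the start of the `r`-th segment
(1-indexed) of the 4-3-6-5 sequence starting at `k`. -/
inductive NthSegStart (k : ℕ) : ℕ → ℕ → Prop
  | first (i : ℕ) : isStart465 (seq465 k i) → (∀ m, m < i → ¬ isStart465 (seq465 k m)) →
      NthSegStart k 1 i
  | next (r i j : ℕ) : NthSegStart k r i → i < j → isStart465 (seq465 k j) →
      (∀ m, i < m → m < j → ¬ isStart465 (seq465 k m)) → NthSegStart k (r + 1) j

def Reachable465 : ℕ × ℕ × ℕ → Prop
  | (t, 4, s) => t % 4 = s ∧ 4 ≤ t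
  | (t, 3, s) => t % 3 = s ∧ s ≤ 1 ∧ 3 ≤ t
  | (t, 6, s) => t % 6 = s ∧ s ≤ 4 ∧ 5 ≤ t
  | (t, 5, s) => t % 5 = s ∧ s ≤ 1 ∧ 5 ≤ t
  | _ => False

-- On reachable states of type 5 or 6, or of type 3 with element `> 4`, this is the value of the
-- next segment start: an element `6q + s` of type 6 is brought down to `6q + min s 1`, then mapped
-- to `5q + min s 1` and on to `4q + min s 1`.
def nextStart465 : ℕ × ℕ × ℕ → ℕ
  | (t, 4, _) => t
  | (t, 5, _) => 4 * (t / 5) + t % 5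
  | (t, _, _) => 4 * (t / 6) + min (t % 6) 1

theorem Reachable465.type_cases : ∀ {t d s : ℕ}, Reachable465 (t, d, s) →
    (d = 4 ∧ s < 4) ∨ (d = 3 ∧ s ≤ 1) ∨ (d = 6 ∧ s ≤ 4) ∨ (d = 5 ∧ s ≤ 1)
  | _, 4, _, ⟨h, _⟩ => by omega
  | _, 3, _, ⟨_, h, _⟩ => by omega
  | _, 6, _, ⟨_, h, _⟩ => by omega
  | _, 5, _, ⟨_, h, _⟩ => by omega

theorem Reachable465.step_and_nextStart465_step_le {p : ℕ × ℕ × ℕ} (hp : Reachable465 p) :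
    Reachable465 (step465 p) ∧ nextStart465 (step465 p) ≤ nextStart465 p := by
  obtain ⟨t, d, s⟩ := p
  rcases hp.type_cases with ⟨rfl, hs⟩ | ⟨rfl, hs⟩ | ⟨rfl, hs⟩ | ⟨rfl, hs⟩ <;> interval_cases s <;>
    simp only [Reachable465] at hp <;> simp only [step465] <;> (try split_ifs) <;>
    simp only [Reachable465, nextStart465, true_and] <;> omega

theorem nextStart465_of_isStart465 {p : ℕ × ℕ × ℕ} (hs : isStart465 p) :
    nextStart465 p = p.1 := by
  obtain ⟨t, d, s⟩ := p
  rcases hs with h | h <;> obtain ⟨rfl, rfl⟩ := Prod.mk.inj h <;> rfl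

theorem Reachable465.four_le_of_isStart465 {p : ℕ × ℕ × ℕ} (hp : Reachable465 p)
    (hs : isStart465 p) : 4 ≤ p.1 := by
  obtain ⟨t, d, s⟩ := p
  rcases hs with h | h <;> obtain ⟨rfl, rfl⟩ := Prod.mk.inj h <;> exact hp.2

theorem Reachable465.two_mul_nextStart465_step_le {p : ℕ × ℕ × ℕ} (hp : Reachable465 p)
    (hs : isStart465 p) : 2 * nextStart465 (step465 p) ≤ p.1 + 1 := by
  obtain ⟨t, d, s⟩ := p
  rcases hs with h | h <;> obtain ⟨rfl, rfl⟩ := Prod.mk.inj h <;>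
    simp only [Reachable465] at hp <;> simp only [step465, nextStart465] <;> omega

theorem seq465_succ (k i : ℕ) : seq465 k (i + 1) = step465 (seq465 k i) :=
  Function.iterate_succ_apply' _ _ _

theorem reachable465_seq465 {k : ℕ} (hk : 4 ≤ k) (i : ℕ) : Reachable465 (seq465 k i) := by
  induction i with
  | zero => exact ⟨rfl, hk⟩
  | succ i ih => rw [seq465_succ]; exact ih.step_and_nextStart465_step_le.1

theorem antitone_nextStart465_seq465 {k : ℕ} (hk : 4 ≤ k) :
    Antitone fun i ↦ nextStart465 (seq465 k i) :=
  antitone_nat_of_succ_le fun i ↦ by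
    rw [seq465_succ]; exact (reachable465_seq465 hk i).step_and_nextStart465_step_le.2

theorem NthSegStart.isStart465 {k r i : ℕ} (h : NthSegStart k r i) : isStart465 (seq465 k i) := by
  cases h <;> assumption

theorem NthSegStart.one_le {k r i : ℕ} (h : NthSegStart k r i) : 1 ≤ r := by
  cases h <;> omega

theorem le_nextStart465_seq465 {k i j : ℕ} (hk : 4 ≤ k) (hs : isStart465 (seq465 k j))
    (hij : i ≤ j) : (seq465 k j).1 ≤ nextStart465 (seq465 k i) :=
  nextStart465_of_isStart465 hs ▸ antitone_nextStart465_seq465 hk hij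

theorem NthSegStart.two_pow_mul_le {k r i : ℕ} (hk : 4 ≤ k) (h : NthSegStart k r i) :
    2 ^ (r - 1) * ((seq465 k i).1 - 1) ≤ k - 1 := by
  induction h with
  | first i hs _ =>
    have : (seq465 k i).1 ≤ k := le_nextStart465_seq465 hk hs (Nat.zero_le i)
    simp only [Nat.sub_self, pow_zero, one_mul]
    omega
  | next r i j hprev hij hs _ ih =>
    have hhalf : 2 * ((seq465 k j).1 - 1) ≤ (seq465 k i).1 - 1 := by
      have hj := le_nextStart465_seq465 hk hs hij
      have hi := (reachable465_seq465 hk i).two_mul_nextStart465_step_le hprev.isStart465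
      rw [seq465_succ] at hj
      omega
    calc 2 ^ (r + 1 - 1) * ((seq465 k j).1 - 1)
        = 2 ^ (r - 1) * (2 * ((seq465 k j).1 - 1)) := by
          rw [← mul_assoc, ← pow_succ, Nat.sub_add_cancel hprev.one_le, Nat.add_sub_cancel]
      _ ≤ 2 ^ (r - 1) * ((seq465 k i).1 - 1) := Nat.mul_le_mul_left _ hhalf
      _ ≤ k - 1 := ih

theorem Nat.le_ceil_div_of_mul_sub_one_lt {α : Type*} [Semifield α] [LinearOrder α]
    [IsStrictOrderedRing α] [FloorSemiring α] {a b n : ℕ} (hb : 0 < b) (h : b * (n - 1) < a) :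
    n ≤ ⌈(a : α) / b⌉₊ := by
  have : n - 1 < ⌈(a : α) / b⌉₊ := by
    rw [Nat.lt_ceil, lt_div_iff₀ (by exact_mod_cast hb)]
    exact_mod_cast (mul_comm b (n - 1)) ▸ h
  omega

/-- In the 4-3-6-5 sequence starting at `k`, the first element of the `r`-th segment is at most
`⌈k/2^(r-1)⌉`, and the number of segments is at most `⌊log₂ k⌋`. -/
theorem seq465_segment_start_bound (k : ℕ) (hk : 4 ≤ k) (r i : ℕ)
    (hseg : NthSegStart k r i) :
    (seq465 k i).1 ≤ ⌈(k : ℝ) / 2 ^ (r - 1)⌉₊ ∧ r ≤ Nat.log 2 k := by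
  have hbound := hseg.two_pow_mul_le hk
  have hfour := (reachable465_seq465 hk i).four_le_of_isStart465 hseg.isStart465
  constructor
  · exact_mod_cast Nat.le_ceil_div_of_mul_sub_one_lt (α := ℝ) (Nat.two_pow_pos _) (by omega)
  · refine Nat.le_log_of_pow_le one_lt_two ?_
    calc 2 ^ r = 2 ^ (r - 1) * 2 := by rw [← pow_succ, Nat.sub_add_cancel hseg.one_le]
      _ ≤ 2 ^ (r - 1) * ((seq465 k i).1 - 1) := Nat.mul_le_mul_left _ (by omega)
      _ ≤ k := by omega
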